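/- Let H ∈ (0,1). Then the constant C_H := ∫_0^∞ ( v^{1/2−H} + (v−2)_+^{1/2−H} − 2(v−1)_+^{1/2−H} )² dv is finite and strictly positive, and for every t ∈ ℝ and r > 0 the function h(u) = (u−t+r)_+^{1/2−H} + (u−t−r)_+^{1/2−H} − 2(u−t)_+^{1/2−H} belongs to L²(ℝ) with ∫_ℝ h(u)² du = C_H · r^{2−2H}. -/

import Mathlib

open MeasureTheory

/-- `pospow x a = x^a` for `x > 0` and `0` for `x ≤ 0` (with `x_+^0 = 1` for `x > 0`). -/
noncomputable def pospow (x a : ℝ) : ℝ := if 0 < x then x ^ a else 0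

lemma pospow_of_pos {x : ℝ} (hx : 0 < x) (a : ℝ) : pospow x a = x ^ a := if_pos hx

lemma pospow_of_nonpos {x : ℝ} (hx : x ≤ 0) (a : ℝ) : pospow x a = 0 :=
  if_neg (not_lt.2 hx)

lemma measurable_pospow (a : ℝ) : Measurable (fun x : ℝ => pospow x a) := by
  unfold pospow
  exact Measurable.ite (measurableSet_lt measurable_const measurable_id)
    (measurable_id.pow_const a) measurable_const

lemma pospow_mul {r : ℝ} (hr : 0 < r) (x a : ℝ) :
    pospow (r * x) a = r ^ a * pospow x a := by
  unfold pospow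
  by_cases hx : 0 < x
  · rw [if_pos (mul_pos hr hx), if_pos hx, Real.mul_rpow hr.le hx.le]
  · rw [if_neg, if_neg hx, mul_zero]
    push_neg at hx ⊢
    exact mul_nonpos_of_nonneg_of_nonpos hr.le hx

lemma pospow_sq (x a : ℝ) : (pospow x a) ^ 2 = pospow x (2 * a) := by
  unfold pospow
  split
  · rw [← Real.rpow_natCast (x ^ a) 2, ← Real.rpow_mul (le_of_lt ‹_›)]
    norm_num [mul_comm]
  · simp

/-- Mean value inequality over an interval of length one. -/
lemma mvt_bound {f f' : ℝ → ℝ} {x C : ℝ}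
    (hf : ∀ s ∈ Set.Icc x (x + 1), HasDerivAt f (f' s) s)
    (hb : ∀ s ∈ Set.Icc x (x + 1), |f' s| ≤ C) :
    |f (x + 1) - f x| ≤ C := by
  have h := norm_image_sub_le_of_norm_deriv_le_segment'
    (f := f) (f' := f') (a := x) (b := x + 1)
    (fun s hs => (hf s hs).hasDerivWithinAt)
    (fun s hs => hb s (Set.Ico_subset_Icc_self hs)) (x + 1)
    (Set.right_mem_Icc.2 (by linarith))
  simpa using h

lemma rpow_succ_sub_le {γ : ℝ} (hγ : γ ≤ 1) {x : ℝ} (hx : 0 < x) :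
    |(x + 1) ^ γ - x ^ γ| ≤ |γ| * x ^ (γ - 1) := by
  apply mvt_bound (f := fun s : ℝ => s ^ γ) (f' := fun s : ℝ => γ * s ^ (γ - 1))
  · intro s hs
    exact Real.hasDerivAt_rpow_const (Or.inl (ne_of_gt (lt_of_lt_of_le hx hs.1)))
  · intro s hs
    have hs0 : 0 < s := lt_of_lt_of_le hx hs.1
    rw [abs_mul, abs_of_nonneg (Real.rpow_nonneg hs0.le _)]
    exact mul_le_mul_of_nonneg_left
      (Real.rpow_le_rpow_of_nonpos hx hs.1 (by linarith)) (abs_nonneg _)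

lemma second_diff_bound {α : ℝ} (hα : α ≤ 1) {x : ℝ} (hx : 0 < x) :
    |(x + 2) ^ α + x ^ α - 2 * (x + 1) ^ α| ≤ |α| * |α - 1| * x ^ (α - 2) := by
  have key : (x + 2) ^ α + x ^ α - 2 * (x + 1) ^ α
      = (fun s : ℝ => (s + 1) ^ α - s ^ α) (x + 1)
        - (fun s : ℝ => (s + 1) ^ α - s ^ α) x := by
    have h2 : x + 1 + 1 = x + 2 := by ring
    simp only [h2]; ring
  rw [key]
  apply mvt_bound (f := fun s : ℝ => (s + 1) ^ α - s ^ α)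
    (f' := fun s : ℝ => α * (s + 1) ^ (α - 1) - α * s ^ (α - 1))
  · intro s hs
    have hs0 : 0 < s := lt_of_lt_of_le hx hs.1
    have h1 : HasDerivAt (fun s : ℝ => (s + 1) ^ α) (α * (s + 1) ^ (α - 1)) s := by
      have := (Real.hasDerivAt_rpow_const (x := s + 1) (p := α)
        (Or.inl (by linarith : s + 1 ≠ 0))).comp s ((hasDerivAt_id s).add_const 1)
      simpa [Function.comp_def] using this
    exact h1.sub (Real.hasDerivAt_rpow_const (Or.inl hs0.ne'))
  · intro s hs
    have hs0 : 0 < s := lt_of_lt_of_le hx hs.1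
    rw [← mul_sub, abs_mul]
    have h3 := rpow_succ_sub_le (γ := α - 1) (by linarith) hs0
    have h4 : s ^ (α - 1 - 1) ≤ x ^ (α - 2) := by
      calc s ^ (α - 1 - 1) ≤ x ^ (α - 1 - 1) :=
            Real.rpow_le_rpow_of_nonpos hx hs.1 (by linarith)
        _ = x ^ (α - 2) := by congr 1; ring
    calc |α| * |(s + 1) ^ (α - 1) - s ^ (α - 1)|
        ≤ |α| * (|α - 1| * s ^ (α - 1 - 1)) :=
          mul_le_mul_of_nonneg_left h3 (abs_nonneg _)
      _ ≤ |α| * (|α - 1| * x ^ (α - 2)) :=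
          mul_le_mul_of_nonneg_left
            (mul_le_mul_of_nonneg_left h4 (abs_nonneg _)) (abs_nonneg _)
      _ = |α| * |α - 1| * x ^ (α - 2) := by ring

/-- The rescaled second-difference kernel. -/
noncomputable def SD (α : ℝ) (v : ℝ) : ℝ :=
  pospow v α + pospow (v - 2) α - 2 * pospow (v - 1) α

lemma measurable_SD (α : ℝ) : Measurable (SD α) := by
  unfold SD
  exact ((measurable_pospow α).add
    ((measurable_pospow α).comp (measurable_id.sub_const 2))).sub
    (((measurable_pospow α).comp (measurable_id.sub_const 1)).const_mul 2)

lemma SD_of_nonpos {α v : ℝ} (hv : v ≤ 0) : SD α v = 0 := by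
  unfold SD
  rw [pospow_of_nonpos hv, pospow_of_nonpos (by linarith), pospow_of_nonpos (by linarith)]
  ring

lemma SD_bound {α : ℝ} (hα : α ≤ 1) {v : ℝ} (hv : 2 < v) :
    |SD α v| ≤ |α| * |α - 1| * (v - 2) ^ (α - 2) := by
  have hx : 0 < v - 2 := by linarith
  have e0 : v - 2 + 2 = v := by ring
  have e1 : v - 2 + 1 = v - 1 := by ring
  have h0 : pospow v α = (v - 2 + 2) ^ α := by
    rw [pospow_of_pos (by linarith), e0]
  have h1 : pospow (v - 1) α = (v - 2 + 1) ^ α := by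
    rw [pospow_of_pos (by linarith : (0:ℝ) < v - 1), e1]
  have h2 : pospow (v - 2) α = (v - 2) ^ α := pospow_of_pos hx α
  unfold SD
  rw [h0, h1, h2]
  exact second_diff_bound hα hx

/-- Translation of an `IntegrableOn` statement. -/
lemma integrableOn_comp_sub_right {f : ℝ → ℝ} {s : Set ℝ} (hs : MeasurableSet s)
    (hf : IntegrableOn f s) (c : ℝ) :
    IntegrableOn (fun v => f (v - c)) ((fun v => v - c) ⁻¹' s) := by
  have hps : MeasurableSet ((fun v : ℝ => v - c) ⁻¹' s) :=
    hs.preimage (measurable_id.sub_const c)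
  rw [← integrable_indicator_iff hps]
  have heq : ∀ v, ((fun v : ℝ => v - c) ⁻¹' s).indicator (fun v => f (v - c)) v
      = (s.indicator f) (v - c) := by
    intro v
    by_cases h : v - c ∈ s
    · rw [Set.indicator_of_mem h,
        Set.indicator_of_mem (show v ∈ (fun v : ℝ => v - c) ⁻¹' s from h)]
    · rw [Set.indicator_of_notMem h,
        Set.indicator_of_notMem (show v ∉ (fun v : ℝ => v - c) ⁻¹' s from h)]
  rw [funext heq]
  exact ((integrable_indicator_iff hs).2 hf).comp_sub_right c

lemma integrableOn_pospow_Ioc {β : ℝ} (hβ : -1 < β) (a b : ℝ) :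
    IntegrableOn (fun v => pospow v β) (Set.Ioc a b) := by
  have h1 : IntegrableOn (fun x : ℝ => x ^ β) (Set.Ioc 0 (max b 0)) := by
    have := intervalIntegral.intervalIntegrable_rpow' (a := 0) (b := max b 0) hβ
    rwa [intervalIntegrable_iff_integrableOn_Ioc_of_le (le_max_right b 0)] at this
  have heq : ∀ v, pospow v β = (Set.Ioi (0:ℝ)).indicator (fun x => x ^ β) v := by
    intro v
    by_cases h : 0 < v
    · rw [pospow_of_pos h, Set.indicator_of_mem (Set.mem_Ioi.2 h)]
    · rw [pospow_of_nonpos (not_lt.1 h),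
        Set.indicator_of_notMem (fun hh => h (Set.mem_Ioi.1 hh))]
  rw [IntegrableOn, funext heq, integrable_indicator_iff measurableSet_Ioi]
  rw [IntegrableOn, Measure.restrict_restrict measurableSet_Ioi]
  apply (h1.mono_set _)
  intro v hv
  exact ⟨hv.1, le_max_of_le_left hv.2.2⟩

lemma integrableOn_pospow_shift_Ioc {β : ℝ} (hβ : -1 < β) (c a b : ℝ) :
    IntegrableOn (fun v => pospow (v - c) β) (Set.Ioc a b) := by
  have h := integrableOn_comp_sub_right measurableSet_Ioc
    (integrableOn_pospow_Ioc hβ (a - c) (b - c)) c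
  have hset : (fun v : ℝ => v - c) ⁻¹' Set.Ioc (a - c) (b - c) = Set.Ioc a b := by
    ext v
    simp only [Set.mem_preimage, Set.mem_Ioc]
    constructor <;> rintro ⟨h1, h2⟩ <;> constructor <;> linarith
  rwa [hset] at h

lemma integrableOn_SD_sq {α : ℝ} (hα1 : -1/2 < α) (hα2 : α < 1) :
    IntegrableOn (fun v => (SD α v) ^ 2) (Set.Ioi 0) := by
  have hmeas : Measurable (fun v => (SD α v) ^ 2) := (measurable_SD α).pow_const 2
  have hsplit : Set.Ioc (0:ℝ) 3 ∪ Set.Ioi 3 = Set.Ioi (0:ℝ) :=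
    Set.Ioc_union_Ioi_eq_Ioi (by norm_num)
  rw [← hsplit]
  apply IntegrableOn.union
  · -- on Ioc 0 3
    have hβ : (-1:ℝ) < 2 * α := by linarith
    have hint : IntegrableOn
        (fun v => 3 * pospow v (2*α) + 3 * pospow (v - 2) (2*α)
          + 12 * pospow (v - 1) (2*α)) (Set.Ioc 0 3) := by
      exact (((integrableOn_pospow_Ioc hβ 0 3).const_mul 3).add
        ((integrableOn_pospow_shift_Ioc hβ 2 0 3).const_mul 3)).add
        ((integrableOn_pospow_shift_Ioc hβ 1 0 3).const_mul 12)
    apply Integrable.mono' hint (hmeas.aestronglyMeasurable)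
    refine Filter.Eventually.of_forall fun v => ?_
    have e0 := pospow_sq v α
    have e1 := pospow_sq (v - 1) α
    have e2 := pospow_sq (v - 2) α
    rw [Real.norm_eq_abs, abs_of_nonneg (sq_nonneg _)]
    unfold SD
    nlinarith [sq_nonneg (pospow v α - pospow (v-2) α),
      sq_nonneg (pospow v α + 2 * pospow (v-1) α),
      sq_nonneg (pospow (v-2) α + 2 * pospow (v-1) α),
      sq_nonneg (pospow v α + pospow (v-2) α - 2 * pospow (v-1) α)]
  · -- on Ioi 3
    have hβ : 2 * α - 4 < -1 := by linarith
    set C := |α| * |α - 1| with hC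
    have hint : IntegrableOn (fun v => C^2 * (v - 2) ^ (2*α - 4)) (Set.Ioi 3) := by
      have h := integrableOn_comp_sub_right measurableSet_Ioi
        (integrableOn_Ioi_rpow_of_lt hβ one_pos) 2
      have hset : (fun v : ℝ => v - 2) ⁻¹' Set.Ioi 1 = Set.Ioi 3 := by
        ext v
        simp only [Set.mem_preimage, Set.mem_Ioi]
        constructor <;> intro <;> linarith
      rw [hset] at h
      exact h.const_mul _
    apply Integrable.mono' hint (hmeas.aestronglyMeasurable)
    rw [ae_restrict_iff' measurableSet_Ioi]
    refine Filter.Eventually.of_forall fun v hv => ?_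
    have hv3 : (3:ℝ) < v := hv
    have hx : (0:ℝ) < v - 2 := by linarith
    have hb := SD_bound (le_of_lt hα2) (by linarith : (2:ℝ) < v)
    rw [Real.norm_eq_abs, abs_of_nonneg (sq_nonneg _), ← sq_abs]
    have hnn : 0 ≤ C * (v - 2) ^ (α - 2) :=
      mul_nonneg (mul_nonneg (abs_nonneg _) (abs_nonneg _)) (Real.rpow_nonneg hx.le _)
    calc |SD α v| ^ 2 ≤ (C * (v - 2) ^ (α - 2)) ^ 2 := by
          apply pow_le_pow_left₀ (abs_nonneg _) hb
      _ = C^2 * (v - 2) ^ (2*α - 4) := by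
          rw [mul_pow, ← Real.rpow_natCast ((v-2) ^ (α-2)) 2, ← Real.rpow_mul hx.le]
          congr 1
          push_cast
          ring

theorem statement_6 (H : ℝ) (hH : H ∈ Set.Ioo (0:ℝ) 1) :
    IntegrableOn
      (fun v : ℝ => (v ^ (1/2 - H) + pospow (v - 2) (1/2 - H) - 2 * pospow (v - 1) (1/2 - H)) ^ 2)
      (Set.Ioi 0) ∧
    0 < (∫ v in Set.Ioi (0:ℝ),
        (v ^ (1/2 - H) + pospow (v - 2) (1/2 - H) - 2 * pospow (v - 1) (1/2 - H)) ^ 2) ∧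
    ∀ (t r : ℝ), 0 < r →
      MemLp (fun u : ℝ => pospow (u - t + r) (1/2 - H) + pospow (u - t - r) (1/2 - H)
        - 2 * pospow (u - t) (1/2 - H)) 2 (volume : Measure ℝ) ∧
      (∫ u : ℝ, (pospow (u - t + r) (1/2 - H) + pospow (u - t - r) (1/2 - H)
          - 2 * pospow (u - t) (1/2 - H)) ^ 2)
        = (∫ v in Set.Ioi (0:ℝ),
            (v ^ (1/2 - H) + pospow (v - 2) (1/2 - H) - 2 * pospow (v - 1) (1/2 - H)) ^ 2)
          * r ^ (2 - 2*H) := by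
  obtain ⟨hH0, hH1⟩ := hH
  set α : ℝ := 1/2 - H with hα
  have hα1 : -1/2 < α := by rw [hα]; linarith
  have hα2 : α < 1 := by rw [hα]; linarith
  -- the statement's integrand agrees with SD² on Ioi 0
  have hEqOn : Set.EqOn
      (fun v : ℝ => (v ^ α + pospow (v - 2) α - 2 * pospow (v - 1) α) ^ 2)
      (fun v => (SD α v) ^ 2) (Set.Ioi 0) := by
    intro v hv
    simp only [SD, pospow_of_pos (show (0:ℝ) < v from hv)]
  have hSD : IntegrableOn (fun v => (SD α v) ^ 2) (Set.Ioi 0) := integrableOn_SD_sq hα1 hα2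
  have hInt : IntegrableOn
      (fun v : ℝ => (v ^ α + pospow (v - 2) α - 2 * pospow (v - 1) α) ^ 2) (Set.Ioi 0) :=
    hSD.congr_fun (fun v hv => (hEqOn hv).symm) measurableSet_Ioi
  have hIntEq : (∫ v in Set.Ioi (0:ℝ),
      (v ^ α + pospow (v - 2) α - 2 * pospow (v - 1) α) ^ 2)
      = ∫ v in Set.Ioi (0:ℝ), (SD α v) ^ 2 :=
    setIntegral_congr_fun measurableSet_Ioi hEqOn
  refine ⟨hInt, ?_, ?_⟩
  · -- positivity
    rw [hIntEq]
    rw [setIntegral_pos_iff_support_of_nonneg_ae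
      (Filter.Eventually.of_forall fun v => sq_nonneg _) hSD]
    have hsub : Set.Ioo (0:ℝ) 1 ⊆
        Function.support (fun v => (SD α v) ^ 2) ∩ Set.Ioi 0 := by
      intro v hv
      refine ⟨?_, hv.1⟩
      have h1 : SD α v = v ^ α := by
        unfold SD
        rw [pospow_of_pos hv.1, pospow_of_nonpos (by linarith [hv.2]),
          pospow_of_nonpos (by linarith [hv.2])]
        ring
      simp only [Function.mem_support]
      rw [h1]
      exact pow_ne_zero 2 (ne_of_gt (Real.rpow_pos_of_pos hv.1 α))
    calc (0:ENNReal) < volume (Set.Ioo (0:ℝ) 1) := by simp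
      _ ≤ _ := measure_mono hsub
  · -- scaling
    intro t r hr
    set b : ℝ := t - r with hb
    have hrne : r ≠ 0 := hr.ne'
    -- rewrite h u ^ 2 = (r^α)^2 * SD α ((u - b)/r) ^ 2
    have hrepr : ∀ u : ℝ,
        pospow (u - t + r) α + pospow (u - t - r) α - 2 * pospow (u - t) α
          = r ^ α * SD α ((u - b) / r) := by
      intro u
      have e0 : u - t + r = r * ((u - b) / r) := by field_simp [hb]; ring
      have e1 : u - t = r * ((u - b) / r - 1) := by field_simp [hb]; ring
      have e2 : u - t - r = r * ((u - b) / r - 2) := by field_simp [hb]; ring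
      rw [e0, e2, e1, pospow_mul hr, pospow_mul hr, pospow_mul hr]
      unfold SD
      ring
    have hSDfull : Integrable (fun v => (SD α v) ^ 2) := by
      have heq : ∀ v, (SD α v) ^ 2
          = (Set.Ioi (0:ℝ)).indicator (fun v => (SD α v) ^ 2) v := by
        intro v
        by_cases h : 0 < v
        · simp only [Set.indicator_apply, Set.mem_Ioi, if_pos h]
        · simp only [Set.indicator_apply, Set.mem_Ioi, if_neg h, SD_of_nonpos (not_lt.1 h)]
          norm_num
      rw [funext heq]
      exact (integrable_indicator_iff measurableSet_Ioi).2 hSD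
    have hcomp : Integrable (fun u : ℝ => (SD α ((u - b) / r)) ^ 2) :=
      (hSDfull.comp_div hrne).comp_sub_right b
    have hsq : ∀ u : ℝ,
        (pospow (u - t + r) α + pospow (u - t - r) α - 2 * pospow (u - t) α) ^ 2
          = (r ^ α) ^ 2 * (SD α ((u - b) / r)) ^ 2 := by
      intro u
      rw [hrepr u, mul_pow]
    have hmeash : AEStronglyMeasurable
        (fun u : ℝ => pospow (u - t + r) α + pospow (u - t - r) α
          - 2 * pospow (u - t) α) volume := by
      apply Measurable.aestronglyMeasurable
      exact (((measurable_pospow α).comp ((measurable_id.sub_const t).add_const r)).add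
        ((measurable_pospow α).comp ((measurable_id.sub_const t).sub_const r))).sub
        (((measurable_pospow α).comp (measurable_id.sub_const t)).const_mul 2)
    constructor
    · rw [memLp_two_iff_integrable_sq hmeash]
      have : Integrable (fun u : ℝ => (r ^ α) ^ 2 * (SD α ((u - b) / r)) ^ 2) :=
        hcomp.const_mul _
      exact this.congr (Filter.Eventually.of_forall fun u => (hsq u).symm)
    · -- the integral identity
      have step1 : (∫ u : ℝ, (pospow (u - t + r) α + pospow (u - t - r) α
            - 2 * pospow (u - t) α) ^ 2)
          = (r ^ α) ^ 2 * ∫ u : ℝ, (SD α ((u - b) / r)) ^ 2 := by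
        simp_rw [hsq]
        exact integral_const_mul _ _
      have step2 : (∫ u : ℝ, (SD α ((u - b) / r)) ^ 2)
          = ∫ u : ℝ, (SD α (u / r)) ^ 2 :=
        integral_sub_right_eq_self (fun u : ℝ => (SD α (u / r)) ^ 2) b
      have step3 : (∫ u : ℝ, (SD α (u / r)) ^ 2) = r * ∫ v : ℝ, (SD α v) ^ 2 := by
        rw [Measure.integral_comp_div (fun v : ℝ => (SD α v) ^ 2) r,
          abs_of_pos hr, smul_eq_mul]
      have step4 : (∫ v : ℝ, (SD α v) ^ 2) = ∫ v in Set.Ioi (0:ℝ), (SD α v) ^ 2 := by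
        symm
        apply setIntegral_eq_integral_of_forall_compl_eq_zero
        intro v hv
        rw [SD_of_nonpos (not_lt.1 hv)]
        norm_num
      have hbpow : (r ^ α) ^ 2 * r = r ^ (2 - 2*H) := by
        nth_rewrite 2 [← Real.rpow_one r]
        rw [← Real.rpow_natCast (r ^ α) 2, ← Real.rpow_mul hr.le, ← Real.rpow_add hr]
        congr 1
        push_cast
        rw [hα]
        ring
      rw [step1, step2, step3, step4, hIntEq, ← hbpow]
      ring
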